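/- arXiv:0711.0436 — 2 statements merged into one kernel-verified Lean document; each statement's English description precedes it below -/
import Mathlib

section
/- Let Q be a ∂_F-delta operator and let R = Σ_{n≥0} (a_n/F_n!) Q^n ∈ Σ_F (pointwise finite sum). Then R is a ∂_F-delta operator if and only if a_0 = 0 and a_1 ≠ 0. -/
open Polynomial Finset

/-- F-factorial: `Ffact n = F_n · F_{n-1} ··· F_1`, with `Ffact 0 = 1`. -/
def Ffact (n : ℕ) : ℕ := ∏ i ∈ Finset.range n, Nat.fib (i + 1)

/-- Fibonomial coefficient `C_F(n,k) = F_n!/(F_k!·F_{n−k}!)`, taken in a field `K`. -/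
noncomputable def fibnom (K : Type*) [Field K] (n k : ℕ) : K :=
  (Ffact n : K) / ((Ffact k : K) * (Ffact (n - k) : K))

variable (K : Type*) [Field K] [CharZero K]

/-- The F-derivative `∂_F`, the linear operator with `∂_F x^n = F_n x^{n-1}`. -/
noncomputable def fderivF : Module.End K (Polynomial K) :=
  Polynomial.lsum fun n => (Nat.fib n : K) • (Polynomial.monomial (n - 1) : K →ₗ[K] Polynomial K)

/-- The F-translation operator `E^y(∂_F) = Σ_{k≥0} (y^k/F_k!) ∂_F^k`; since `∂_F`
strictly decreases degree, the sum truncated at `natDegree p + 1` is the full sum. -/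
noncomputable def Etrans (y : K) (p : Polynomial K) : Polynomial K :=
  ∑ k ∈ Finset.range (p.natDegree + 1), (y ^ k / (Ffact k : K)) • ((fderivF K ^ k) p)

/-- A linear operator on `K[x]` is `∂_F`-shift invariant iff it commutes with every
F-translation operator `E^y(∂_F)`. -/
def ShiftInv (T : Module.End K (Polynomial K)) : Prop :=
  ∀ (y : K) (p : Polynomial K), T (Etrans K y p) = Etrans K y (T p)

/-- A `∂_F`-delta operator: a `∂_F`-shift invariant operator `Q` with `Q x` a nonzero
constant. -/
def DeltaOp (Q : Module.End K (Polynomial K)) : Prop :=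
  ShiftInv K Q ∧ ∃ c : K, c ≠ 0 ∧ Q Polynomial.X = Polynomial.C c

/-- `(q_n)` is the `∂_F`-basic polynomial sequence of `Q`. -/
def BasicSeq (Q : Module.End K (Polynomial K)) (q : ℕ → Polynomial K) : Prop :=
  (∀ n : ℕ, (q n).degree = n) ∧ q 0 = 1 ∧ (∀ n : ℕ, 1 ≤ n → (q n).eval 0 = 0) ∧
    ∀ n : ℕ, 1 ≤ n → Q (q n) = (Nat.fib n : K) • q (n - 1)

/-- The operator `x̂_F`, with `x̂_F x^n = ((n+1)/F_{n+1}) x^{n+1}`. -/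
noncomputable def xF : Module.End K (Polynomial K) :=
  Polynomial.lsum fun n =>
    (((n : K) + 1) / (Nat.fib (n + 1) : K)) • (Polynomial.monomial (n + 1) : K →ₗ[K] Polynomial K)

/-- The Graves–Pincherle F-derivative `T' = T∘x̂_F − x̂_F∘T`. -/
noncomputable def GPderiv (T : Module.End K (Polynomial K)) : Module.End K (Polynomial K) :=
  T * xF K - xF K * T

/-- `T = Σ_{k≥0} (a_k/F_k!) Q^k`, expressed via truncations: since a delta operator `Q`
strictly decreases degree, `Q^k p = 0` for `k > natDegree p`, so the truncated sums agree. -/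
def OpSumRep (Q : Module.End K (Polynomial K)) (a : ℕ → K) (T : Module.End K (Polynomial K)) : Prop :=
  ∀ (p : Polynomial K) (N : ℕ), p.natDegree < N →
    T p = ∑ k ∈ Finset.range N, (a k / (Ffact k : K)) • ((Q ^ k) p)

/-- `(s_n)` is a sequence of Sheffer F-polynomials of `Q`. -/
def ShefferSeq (Q : Module.End K (Polynomial K)) (s : ℕ → Polynomial K) : Prop :=
  (∀ n : ℕ, (s n).degree = n) ∧ (∃ c : K, c ≠ 0 ∧ s 0 = Polynomial.C c) ∧
    ∀ n : ℕ, 1 ≤ n → Q (s n) = (Nat.fib n : K) • s (n - 1)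


section Aux

variable {K}

lemma Ffact_zero' : Ffact 0 = 1 := rfl

lemma Ffact_one' : Ffact 1 = 1 := by simp [Ffact]

lemma fderivF_apply (p : Polynomial K) :
    fderivF K p = p.sum fun n r => (Nat.fib n : K) • Polynomial.monomial (n - 1) r := by
  simp [fderivF, Polynomial.lsum_apply]

lemma natDegree_fderivF_le (p : Polynomial K) :
    (fderivF K p).natDegree ≤ p.natDegree - 1 := by
  rw [fderivF_apply, Polynomial.sum_def]
  apply Polynomial.natDegree_sum_le_of_forall_le
  intro n hn
  refine le_trans (Polynomial.natDegree_smul_le _ _) ?_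
  refine le_trans (Polynomial.natDegree_monomial_le _) ?_
  exact Nat.sub_le_sub_right (Polynomial.le_natDegree_of_mem_supp n hn) 1

lemma fderivF_const (p : Polynomial K) (h : p.natDegree = 0) : fderivF K p = 0 := by
  obtain ⟨c, rfl⟩ := Polynomial.natDegree_eq_zero.mp h
  rw [fderivF_apply]
  rw [Polynomial.sum_C_index] <;> simp

lemma fderivF_pow_zero : ∀ (k : ℕ) (p : Polynomial K), p.natDegree < k →
    (fderivF K ^ k) p = 0 := by
  intro k
  induction k with
  | zero => intro p hp; omega
  | succ k ih =>
    intro p hp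
    rw [pow_succ, Module.End.mul_apply]
    rcases Nat.eq_zero_or_pos p.natDegree with h0 | h1
    · rw [fderivF_const p h0, map_zero]
    · exact ih _ (by have := natDegree_fderivF_le p; omega)

lemma natDegree_fderivF_pow_le (k : ℕ) (p : Polynomial K) :
    ((fderivF K ^ k) p).natDegree ≤ p.natDegree := by
  induction k with
  | zero => simp
  | succ k ih =>
    rw [pow_succ', Module.End.mul_apply]
    exact le_trans (le_trans (natDegree_fderivF_le _) (Nat.sub_le _ _)) ih

lemma Etrans_eq_sum (y : K) (p : Polynomial K) (N : ℕ) (h : p.natDegree < N) :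
    Etrans K y p = ∑ k ∈ Finset.range N, (y ^ k / (Ffact k : K)) • ((fderivF K ^ k) p) := by
  rw [Etrans]
  apply Finset.sum_subset (Finset.range_subset_range.mpr h)
  intro k _ hk
  rw [Finset.mem_range, not_lt] at hk
  rw [fderivF_pow_zero k p (by omega), smul_zero]

lemma natDegree_Etrans_le (y : K) (p : Polynomial K) :
    (Etrans K y p).natDegree ≤ p.natDegree := by
  rw [Etrans]
  apply Polynomial.natDegree_sum_le_of_forall_le
  intro k _
  exact le_trans (Polynomial.natDegree_smul_le _ _) (natDegree_fderivF_pow_le k p)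

lemma ShiftInv.pow {Q : Module.End K (Polynomial K)} (h : ShiftInv K Q) (k : ℕ) :
    ShiftInv K (Q ^ k) := by
  induction k with
  | zero => intro y p; simp
  | succ k ih =>
    intro y p
    rw [pow_succ, Module.End.mul_apply, h y p, ih y (Q p), Module.End.mul_apply]

end Aux

set_option maxHeartbeats 1000000

/-- `R = Σ_{n≥0}(a_n/F_n!)Q^n` is a `∂_F`-delta operator iff
`a_0 = 0` and `a_1 ≠ 0`. -/

theorem delta_iff_coeffs (Q R : Module.End K (Polynomial K)) (hQ : DeltaOp K Q)
    (a : ℕ → K) (hR : OpSumRep K Q a R) :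
    DeltaOp K R ↔ (a 0 = 0 ∧ a 1 ≠ 0) := by
  obtain ⟨hQs, c, hc, hQX⟩ := hQ
  have hX : R Polynomial.X = a 0 • Polynomial.X + a 1 • Polynomial.C c := by
    rw [hR Polynomial.X 2 (by rw [Polynomial.natDegree_X]; omega)]
    rw [Finset.sum_range_succ, Finset.sum_range_one, pow_zero, pow_one, hQX,
      Ffact_zero', Ffact_one', Module.End.one_apply, Nat.cast_one, div_one, div_one]
  constructor
  · rintro ⟨hRs, c', hc', hRX⟩
    rw [hRX] at hX
    have h1 := congrArg (fun q => Polynomial.coeff q 1) hX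
    simp [Polynomial.coeff_smul] at h1
    have ha0 : a 0 = 0 := h1.symm
    have h0 := congrArg (fun q => Polynomial.coeff q 0) hX
    simp [Polynomial.coeff_smul, ha0] at h0
    refine ⟨ha0, fun ha1 => hc' ?_⟩
    rw [h0, ha1, zero_mul]
  · rintro ⟨ha0, ha1⟩
    refine ⟨?_, a 1 * c, mul_ne_zero ha1 hc, ?_⟩
    · intro y p
      set N := p.natDegree + 1 with hN
      have hRE : R (Etrans K y p) =
          ∑ k ∈ Finset.range N, (a k / (Ffact k : K)) • (Etrans K y ((Q ^ k) p)) := by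
        rw [hR (Etrans K y p) N (lt_of_le_of_lt (natDegree_Etrans_le y p) (by omega))]
        exact Finset.sum_congr rfl fun k _ => by rw [ShiftInv.pow hQs k y p]
      set L := ((Finset.range N).sup fun k => ((Q ^ k) p).natDegree) + 1 with hL
      have hLk : ∀ k ∈ Finset.range N, ((Q ^ k) p).natDegree < L := by
        intro k hk
        exact Nat.lt_succ_of_le (Finset.le_sup (f := fun k => ((Q ^ k) p).natDegree) hk)
      have hRp : R p = ∑ k ∈ Finset.range N, (a k / (Ffact k : K)) • ((Q ^ k) p) :=
        hR p N (by omega)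
      have hRpL : (R p).natDegree < L := by
        rw [hRp]
        have : (∑ k ∈ Finset.range N, (a k / (Ffact k : K)) • ((Q ^ k) p)).natDegree ≤ L - 1 := by
          apply Polynomial.natDegree_sum_le_of_forall_le
          intro k hk
          refine le_trans (Polynomial.natDegree_smul_le _ _) ?_
          have := hLk k hk
          omega
        omega
      rw [Etrans_eq_sum y (R p) L hRpL, hRp, hRE]
      simp only [map_sum, map_smul, Finset.smul_sum]
      rw [Finset.sum_comm]
      apply Finset.sum_congr rfl
      intro k hk
      rw [Etrans_eq_sum y ((Q ^ k) p) L (hLk k hk), Finset.smul_sum]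
      apply Finset.sum_congr rfl
      intro j _
      rw [smul_comm]
    · rw [hX, ha0, zero_smul, zero_add, Polynomial.smul_eq_C_mul, ← Polynomial.C_mul]
end

section
/- An operator Q ∈ Σ_F is a ∂_F-delta operator if and only if there exists an invertible S ∈ Σ_F (i.e. S has a two-sided inverse lying in Σ_F) such that Q = ∂_F ∘ S. -/
open Polynomial Finset

variable (K : Type*) [Field K] [CharZero K]

set_option linter.unusedSectionVars false
lemma Ffact_ne_zero (n : ℕ) : (Ffact n : K) ≠ 0 := by
  have : Ffact n ≠ 0 := by
    unfold Ffact
    exact Finset.prod_ne_zero_iff.2 fun i _ => Nat.fib_pos.2 (Nat.succ_pos i) |>.ne'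
  exact_mod_cast this

lemma fderivF_monomial (n : ℕ) (c : K) :
    fderivF K (monomial n c) = (Nat.fib n : K) • monomial (n - 1) c := by
  simp [fderivF, Polynomial.lsum_apply, Polynomial.sum_monomial_index]

lemma coeff_fderivF (p : Polynomial K) (m : ℕ) :
    (fderivF K p).coeff m = (Nat.fib (m + 1) : K) * p.coeff (m + 1) := by
  induction p using Polynomial.induction_on' with
  | add p q hp hq => simp [hp, hq, mul_add]
  | monomial n c =>
    rw [fderivF_monomial]
    rcases n with _ | n
    · simp
    · simp only [Polynomial.coeff_smul, Polynomial.coeff_monomial, Nat.succ_sub_one,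
        smul_eq_mul]
      by_cases h : n = m
      · subst h; simp
      · rw [if_neg h, if_neg (by omega), mul_zero, mul_zero]

lemma coeff_fderivF_pow (k : ℕ) (p : Polynomial K) (m : ℕ) (h : p.natDegree < m + k) :
    ((fderivF K ^ k) p).coeff m = 0 := by
  induction k generalizing m with
  | zero =>
    rw [pow_zero, Module.End.one_apply]
    exact Polynomial.coeff_eq_zero_of_natDegree_lt (by omega)
  | succ k ih =>
    rw [pow_succ', Module.End.mul_apply, coeff_fderivF, ih (m + 1) (by omega), mul_zero]

lemma fderivF_pow_eq_zero (k : ℕ) (p : Polynomial K) (h : p.natDegree < k) :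
    (fderivF K ^ k) p = 0 := by
  ext m
  rw [coeff_fderivF_pow K k p m (by omega), Polynomial.coeff_zero]

lemma eq_C_of_fderivF_eq_zero (p : Polynomial K) (h : fderivF K p = 0) :
    p = Polynomial.C (p.coeff 0) := by
  ext m
  rcases m with _ | m
  · simp
  · have h1 : (fderivF K p).coeff m = 0 := by rw [h]; simp
    rw [coeff_fderivF] at h1
    have h2 : (Nat.fib (m + 1) : K) ≠ 0 := by
      exact_mod_cast (Nat.fib_pos.2 (Nat.succ_pos m)).ne'
    simp only [Polynomial.coeff_C, if_neg (Nat.succ_ne_zero m)]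
    exact (mul_eq_zero.1 h1).resolve_left h2

lemma fderivF_pow_monomial (k n : ℕ) (c : K) :
    (fderivF K ^ k) (monomial n c)
      = (∏ i ∈ Finset.range k, (Nat.fib (n - i) : K)) • monomial (n - k) c := by
  induction k generalizing n with
  | zero => simp
  | succ k ih =>
    rw [pow_succ, Module.End.mul_apply, fderivF_monomial, map_smul, ih (n-1), smul_smul]
    congr 1
    · rw [Finset.prod_range_succ', mul_comm]
      congr 1
      exact Finset.prod_congr rfl fun i _ => by rw [Nat.sub_sub, Nat.add_comm]
    · rw [Nat.sub_sub, Nat.add_comm]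

lemma Etrans_eq (y : K) (p : Polynomial K) (N : ℕ) (hN : p.natDegree < N) :
    Etrans K y p = ∑ k ∈ Finset.range N, (y ^ k / (Ffact k : K)) • ((fderivF K ^ k) p) := by
  rw [Etrans]
  apply Finset.sum_subset
  · exact Finset.range_subset_range.2 (by omega)
  · intro k _ hk
    rw [Finset.mem_range, not_lt] at hk
    rw [fderivF_pow_eq_zero K k p (by omega), smul_zero]

lemma poly_coeff_unique (N : ℕ) (v : ℕ → Polynomial K)
    (h : ∀ y : K, ∑ k ∈ Finset.range N, y ^ k • v k = 0) :
    ∀ k, k < N → v k = 0 := by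
  intro k hk
  ext m
  have hP : ∀ y : K, Polynomial.eval y
      (∑ j ∈ Finset.range N, Polynomial.C ((v j).coeff m) * Polynomial.X ^ j) = 0 := by
    intro y
    have := congrArg (fun q => Polynomial.coeff q m) (h y)
    simp only [Polynomial.finset_sum_coeff, Polynomial.coeff_smul, smul_eq_mul,
      Polynomial.coeff_zero] at this
    rw [Polynomial.eval_finset_sum]
    simp only [Polynomial.eval_mul, Polynomial.eval_C, Polynomial.eval_pow, Polynomial.eval_X]
    rw [← this]
    exact Finset.sum_congr rfl fun j _ => mul_comm _ _
  have hzero : (∑ j ∈ Finset.range N, Polynomial.C ((v j).coeff m) * Polynomial.X ^ j) = 0 := by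
    apply Polynomial.funext
    intro y
    simp [hP y]
  have := congrArg (fun q => Polynomial.coeff q k) hzero
  simp only [Polynomial.finset_sum_coeff, Polynomial.coeff_C_mul, Polynomial.coeff_X_pow,
    Polynomial.coeff_zero, mul_ite, mul_one, mul_zero] at this
  rw [Finset.sum_ite_eq (Finset.range N) k (fun j => (v j).coeff m),
    if_pos (Finset.mem_range.2 hk)] at this
  rw [this, Polynomial.coeff_zero]

lemma shiftInv_of_commute (T : Module.End K (Polynomial K))
    (h : T * fderivF K = fderivF K * T) : ShiftInv K T := by
  have hc : ∀ k : ℕ, T * fderivF K ^ k = fderivF K ^ k * T :=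
    fun k => (Commute.pow_right (h : Commute T (fderivF K)) k)
  have hpow : ∀ (k : ℕ) (p : Polynomial K), T ((fderivF K ^ k) p) = (fderivF K ^ k) (T p) := by
    intro k p
    rw [← Module.End.mul_apply, hc k, Module.End.mul_apply]
  intro y p
  set N := max p.natDegree (T p).natDegree + 1 with hN
  rw [Etrans_eq K y p N (by omega), Etrans_eq K y (T p) N (by omega), map_sum]
  refine Finset.sum_congr rfl fun k _ => ?_
  rw [map_smul, hpow k p]

lemma commute_of_shiftInv (T : Module.End K (Polynomial K)) (h : ShiftInv K T) :
    T * fderivF K = fderivF K * T := by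
  refine LinearMap.ext fun p => ?_
  rw [Module.End.mul_apply, Module.End.mul_apply]
  set N := max p.natDegree (T p).natDegree + 2 with hN
  have key : ∀ y : K, ∑ k ∈ Finset.range N,
      y ^ k • ((Ffact k : K)⁻¹ • (T ((fderivF K ^ k) p) - (fderivF K ^ k) (T p))) = 0 := by
    intro y
    have h1 := h y p
    rw [Etrans_eq K y p N (by omega), Etrans_eq K y (T p) N (by omega), map_sum] at h1
    simp only [map_smul] at h1
    have h2 : ∀ k : ℕ, y ^ k • ((Ffact k : K)⁻¹ • (T ((fderivF K ^ k) p) - (fderivF K ^ k) (T p)))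
        = (y ^ k / (Ffact k : K)) • T ((fderivF K ^ k) p)
          - (y ^ k / (Ffact k : K)) • (fderivF K ^ k) (T p) := by
      intro k
      simp [smul_sub, smul_smul, div_eq_mul_inv]
    rw [Finset.sum_congr rfl fun k _ => h2 k, Finset.sum_sub_distrib, h1, sub_self]
  have := poly_coeff_unique K N _ key 1 (by omega)
  have h2 : T ((fderivF K ^ 1) p) - (fderivF K ^ 1) (T p) = 0 := by
    have hf : ((Ffact 1 : K))⁻¹ ≠ 0 := inv_ne_zero (Ffact_ne_zero K 1)
    exact (smul_eq_zero.1 this).resolve_left hf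
  rw [pow_one] at h2
  exact sub_eq_zero.1 h2

noncomputable def opser (a : ℕ → K) : Module.End K (Polynomial K) :=
  Polynomial.lsum fun n => ∑ k ∈ Finset.range (n + 1),
    a k • ((fderivF K ^ k) ∘ₗ (Polynomial.monomial n : K →ₗ[K] Polynomial K))

lemma opser_monomial (a : ℕ → K) (n : ℕ) (c : K) :
    opser K a (monomial n c)
      = ∑ k ∈ Finset.range (n + 1), a k • (fderivF K ^ k) (monomial n c) := by
  rw [opser, Polynomial.lsum_apply, Polynomial.sum_monomial_index]
  · simp
  · simp

lemma opser_monomial' (a : ℕ → K) (n N : ℕ) (c : K) (hN : n < N) :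
    opser K a (monomial n c)
      = ∑ k ∈ Finset.range N, a k • (fderivF K ^ k) (monomial n c) := by
  rw [opser_monomial]
  apply Finset.sum_subset (Finset.range_subset_range.2 (by omega))
  intro k _ hk
  rw [Finset.mem_range, not_lt] at hk
  rw [fderivF_pow_eq_zero K k _ (lt_of_le_of_lt (Polynomial.natDegree_monomial_le c) (by omega)),
    smul_zero]

lemma opser_fderivF_apply (a : ℕ → K) (n : ℕ) (c : K) :
    opser K a (fderivF K (monomial n c))
      = ∑ k ∈ Finset.range (n + 1), a k • (fderivF K ^ (k + 1)) (monomial n c) := by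
  rw [fderivF_monomial, map_smul, opser_monomial' K a (n - 1) (n + 1) c (by omega),
    Finset.smul_sum]
  refine Finset.sum_congr rfl fun k _ => ?_
  rw [smul_comm, ← map_smul, ← fderivF_monomial, pow_succ, Module.End.mul_apply]

lemma opser_comm_fderivF (a : ℕ → K) :
    opser K a * fderivF K = fderivF K * opser K a := by
  refine Polynomial.lhom_ext' fun n => LinearMap.ext fun c => ?_
  simp only [LinearMap.comp_apply, Module.End.mul_apply]
  rw [opser_fderivF_apply, opser_monomial, map_sum]
  refine Finset.sum_congr rfl fun k _ => ?_
  rw [map_smul, pow_succ', Module.End.mul_apply]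

lemma prod_fib_reflect (n : ℕ) :
    (∏ i ∈ Finset.range n, (Nat.fib (n - i) : K)) = (Ffact n : K) := by
  have : (∏ i ∈ Finset.range n, (Nat.fib (n - i) : K))
      = ∏ i ∈ Finset.range n, (Nat.fib ((n - 1 - i) + 1) : K) := by
    refine Finset.prod_congr rfl fun i hi => ?_
    rw [Finset.mem_range] at hi
    congr 2
    omega
  have h2 := Finset.prod_range_reflect (fun j => (Nat.fib (j + 1) : K)) n
  rw [this, h2, Ffact]
  push_cast
  rfl

lemma opser_monomial_eval0 (a : ℕ → K) (n : ℕ) :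
    (opser K a (monomial n (1 : K))).eval 0 = a n * (Ffact n : K) := by
  rw [opser_monomial, Finset.sum_range_succ, Polynomial.eval_add, Polynomial.eval_finset_sum,
    Finset.sum_eq_zero, zero_add]
  · rw [fderivF_pow_monomial, Nat.sub_self]
    simp only [Polynomial.eval_smul, smul_eq_mul]
    rw [prod_fib_reflect]
    simp [Polynomial.eval_monomial]
  · intro k hk
    rw [Finset.mem_range] at hk
    rw [fderivF_pow_monomial]
    simp only [Polynomial.eval_smul, smul_eq_mul]
    rw [Polynomial.eval_monomial]
    rw [zero_pow (by omega), mul_zero, mul_zero, mul_zero]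

lemma comm_apply (T : Module.End K (Polynomial K)) (h : T * fderivF K = fderivF K * T)
    (p : Polynomial K) : T (fderivF K p) = fderivF K (T p) := by
  rw [← Module.End.mul_apply, h, Module.End.mul_apply]

lemma eq_of_fderivF (P R : Polynomial K) (h1 : fderivF K P = fderivF K R)
    (h2 : P.eval 0 = R.eval 0) : P = R := by
  have h3 : fderivF K (P - R) = 0 := by rw [map_sub, h1, sub_self]
  have h4 := eq_C_of_fderivF_eq_zero K (P - R) h3
  have h5 : (P - R).coeff 0 = 0 := by
    rw [Polynomial.coeff_zero_eq_eval_zero, Polynomial.eval_sub, h2, sub_self]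
  rw [h5, map_zero] at h4
  exact sub_eq_zero.1 h4

lemma expansion (T : Module.End K (Polynomial K)) (hT : T * fderivF K = fderivF K * T) :
    T = opser K (fun n => (T (monomial n (1 : K))).eval 0 / (Ffact n : K)) := by
  set q : ℕ → K := fun n => (T (monomial n (1 : K))).eval 0 / (Ffact n : K) with hq
  have key : ∀ n : ℕ, T (monomial n (1 : K)) = opser K q (monomial n (1 : K)) := by
    intro n
    induction n with
    | zero =>
      refine eq_of_fderivF K _ _ ?_ ?_
      · rw [← comm_apply K T hT, ← comm_apply K (opser K q) (opser_comm_fderivF K q),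
          fderivF_monomial]
        simp
      · rw [opser_monomial_eval0, hq]
        simp [Ffact]
    | succ n ih =>
      refine eq_of_fderivF K _ _ ?_ ?_
      · rw [← comm_apply K T hT, ← comm_apply K (opser K q) (opser_comm_fderivF K q),
          fderivF_monomial, map_smul, map_smul, Nat.add_sub_cancel, ih]
      · rw [opser_monomial_eval0, hq]
        exact (div_mul_cancel₀ (eval 0 (T ((monomial (n+1)) 1))) (Ffact_ne_zero K (n + 1))).symm
  refine Polynomial.lhom_ext' fun n => LinearMap.ext fun c => ?_
  have : (monomial n c : Polynomial K) = c • monomial n (1 : K) := by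
    rw [Polynomial.smul_monomial, smul_eq_mul, mul_one]
  simp only [LinearMap.comp_apply, this, map_smul, key n]

lemma opser_apply (a : ℕ → K) (p : Polynomial K) (N : ℕ) (h : p.natDegree < N) :
    opser K a p = ∑ k ∈ Finset.range N, a k • (fderivF K ^ k) p := by
  conv_lhs => rw [← Polynomial.sum_monomial_eq p, Polynomial.sum_def, map_sum]
  rw [Finset.sum_congr rfl (fun n hn => opser_monomial' K a n N (p.coeff n)
    (lt_of_le_of_lt (Polynomial.le_natDegree_of_mem_supp n hn) h)), Finset.sum_comm]
  refine Finset.sum_congr rfl fun k _ => ?_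
  rw [← Finset.smul_sum, ← map_sum]
  congr 1
  conv_rhs => rw [← Polynomial.sum_monomial_eq p, Polynomial.sum_def]

lemma coeff_opser_of_le (a : ℕ → K) (p : Polynomial K) (m : ℕ) (h : p.natDegree ≤ m) :
    (opser K a p).coeff m = a 0 * p.coeff m := by
  rw [opser_apply K a p (p.natDegree + 1) (by omega), Polynomial.finset_sum_coeff]
  rw [Finset.sum_eq_single 0]
  · simp
  · intro k _ hk
    rw [Polynomial.coeff_smul, coeff_fderivF_pow K k p m (by omega), smul_zero]
  · simp

lemma coeff_opser_eq_zero (a : ℕ → K) (p : Polynomial K) (m : ℕ) (h : p.natDegree < m) :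
    (opser K a p).coeff m = 0 := by
  rw [coeff_opser_of_le K a p m (by omega), Polynomial.coeff_eq_zero_of_natDegree_lt h,
    mul_zero]

lemma opser_bijective (a : ℕ → K) (ha : a 0 ≠ 0) : Function.Bijective (opser K a) := by
  constructor
  · rw [injective_iff_map_eq_zero]
    intro p hp
    by_contra hp0
    have := coeff_opser_of_le K a p p.natDegree le_rfl
    rw [hp, Polynomial.coeff_zero] at this
    have hlc : p.coeff p.natDegree ≠ 0 := Polynomial.leadingCoeff_ne_zero.2 hp0
    exact hlc ((mul_eq_zero.1 this.symm).resolve_left ha)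
  · intro r
    suffices H : ∀ (n : ℕ) (r : Polynomial K), r.natDegree ≤ n → ∃ p, opser K a p = r from
      H r.natDegree r le_rfl
    intro n
    induction n using Nat.strong_induction_on with
    | _ n ih =>
      intro r hr
      by_cases h0 : r = 0
      · exact ⟨0, by rw [map_zero, h0]⟩
      set d := r.natDegree with hd
      set p₀ : Polynomial K := (a 0)⁻¹ • monomial d (r.coeff d) with hp₀
      have hcoeff : (opser K a p₀).coeff d = r.coeff d := by
        rw [coeff_opser_of_le K a p₀ d (by
          rw [hp₀]
          exact le_trans (Polynomial.natDegree_smul_le _ _) (Polynomial.natDegree_monomial_le _))]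
        rw [hp₀, Polynomial.coeff_smul, Polynomial.coeff_monomial, if_pos rfl, smul_eq_mul]
        field_simp
      have hp0deg : p₀.natDegree ≤ d := le_trans (Polynomial.natDegree_smul_le _ _)
        (Polynomial.natDegree_monomial_le _)
      set r' : Polynomial K := r - opser K a p₀ with hr'
      by_cases h1 : r' = 0
      · refine ⟨p₀, ?_⟩
        have h1' : r - opser K a p₀ = 0 := by rw [← hr']; exact h1
        exact (sub_eq_zero.1 h1').symm
      have hle : r'.natDegree ≤ d := by
        apply Polynomial.natDegree_le_iff_coeff_eq_zero.2
        intro m hm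
        rw [hr', Polynomial.coeff_sub, coeff_opser_eq_zero K a p₀ m (lt_of_le_of_lt hp0deg hm),
          Polynomial.coeff_eq_zero_of_natDegree_lt (show r.natDegree < m by omega), sub_zero]
      have hne : r'.natDegree ≠ d := by
        intro heq
        have : r'.coeff d = 0 := by rw [hr', Polynomial.coeff_sub, hcoeff, sub_self]
        rw [← heq] at this
        exact h1 (Polynomial.leadingCoeff_eq_zero.1 this)
      obtain ⟨p₁, hp₁⟩ := ih r'.natDegree (by omega) r' le_rfl
      exact ⟨p₀ + p₁, by rw [map_add, hp₁, hr']; ring⟩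

lemma fderivF_one : fderivF K (1 : Polynomial K) = 0 := by
  rw [← Polynomial.monomial_zero_one, fderivF_monomial]
  simp

lemma fderivF_X : fderivF K (Polynomial.X : Polynomial K) = 1 := by
  rw [← Polynomial.monomial_one_one_eq_X, fderivF_monomial]
  simp

theorem delta_iff_fderiv_comp' (Q : Module.End K (Polynomial K)) (hQ : ShiftInv K Q) :
    DeltaOp K Q ↔ ∃ S Sinv : Module.End K (Polynomial K),
      ShiftInv K S ∧ ShiftInv K Sinv ∧ S * Sinv = 1 ∧ Sinv * S = 1 ∧
      Q = fderivF K * S := by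
  constructor
  · rintro ⟨-, c, hc, hQX⟩
    have hQc := commute_of_shiftInv K Q hQ
    set q : ℕ → K := fun n => (Q (monomial n (1 : K))).eval 0 / (Ffact n : K) with hqdef
    have hexp : Q = opser K q := expansion K Q hQc
    have hq0 : q 0 = 0 := by
      have h1 : (Q Polynomial.X).coeff 1 = 0 := by rw [hQX]; simp [Polynomial.coeff_C]
      rw [hexp, coeff_opser_of_le K q Polynomial.X 1 (le_of_eq Polynomial.natDegree_X),
        Polynomial.coeff_X_one, mul_one] at h1
      exact h1
    have hq1 : q 1 = c := by
      rw [hqdef]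
      simp only
      rw [Polynomial.monomial_one_one_eq_X, hQX]
      have hf : (Ffact 1 : K) = 1 := by norm_num [Ffact]
      simp [hf]
    set s : ℕ → K := fun k => q (k + 1) with hs
    have hs0 : s 0 ≠ 0 := by
      rw [hs]
      simpa [hq1] using hc
    have hcomm := opser_comm_fderivF K s
    have hQS : Q = fderivF K * opser K s := by
      rw [hexp]
      refine Polynomial.lhom_ext' fun n => LinearMap.ext fun x => ?_
      simp only [LinearMap.comp_apply, Module.End.mul_apply]
      rw [opser_monomial' K q n (n + 2) x (by omega), Finset.sum_range_succ', hq0, zero_smul,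
        add_zero, opser_monomial, map_sum]
      refine Finset.sum_congr rfl fun k _ => ?_
      rw [map_smul, pow_succ', Module.End.mul_apply]
    have hbij := opser_bijective K s hs0
    set e := LinearEquiv.ofBijective (opser K s) hbij with he
    set Sinv : Module.End K (Polynomial K) := (e.symm : Polynomial K →ₗ[K] Polynomial K)
      with hSinvdef
    have hSSi : opser K s * Sinv = 1 := by
      refine LinearMap.ext fun p => ?_
      simp only [Module.End.mul_apply, Module.End.one_apply, hSinvdef, LinearEquiv.coe_coe]
      exact e.apply_symm_apply p
    have hSiS : Sinv * opser K s = 1 := by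
      refine LinearMap.ext fun p => ?_
      simp only [Module.End.mul_apply, Module.End.one_apply, hSinvdef, LinearEquiv.coe_coe]
      exact e.symm_apply_apply p
    have hSinvc : Sinv * fderivF K = fderivF K * Sinv := by
      have h2 : Sinv * (opser K s * fderivF K) * Sinv
          = Sinv * (fderivF K * opser K s) * Sinv := by rw [hcomm]
      have h3 : Sinv * (opser K s * fderivF K) * Sinv = fderivF K * Sinv := by
        rw [← mul_assoc, hSiS, one_mul]
      have h4 : Sinv * (fderivF K * opser K s) * Sinv = Sinv * fderivF K := by
        rw [mul_assoc, mul_assoc, hSSi, mul_one]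
      rw [← h4, ← h2, h3]
    exact ⟨opser K s, Sinv, shiftInv_of_commute K _ hcomm, shiftInv_of_commute K _ hSinvc,
      hSSi, hSiS, hQS⟩
  · rintro ⟨S, Sinv, hS, hSinv, hSSi, hSiS, hQeq⟩
    have hcS := commute_of_shiftInv K S hS
    have hS1 : S 1 = Polynomial.C ((S 1).coeff 0) := by
      apply eq_C_of_fderivF_eq_zero
      rw [← comm_apply K S hcS, fderivF_one, map_zero]
    refine ⟨hQ, (S 1).coeff 0, ?_, ?_⟩
    · intro h0
      have h1 : Sinv (S 1) = (1 : Polynomial K) := by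
        have := LinearMap.ext_iff.1 hSiS (1 : Polynomial K)
        simpa using this
      rw [hS1, h0, map_zero, map_zero] at h1
      exact zero_ne_one h1
    · rw [hQeq, Module.End.mul_apply, ← comm_apply K S hcS, fderivF_X]
      exact hS1

/-- `Q ∈ Σ_F` is a `∂_F`-delta operator iff `Q = ∂_F ∘ S` for some
`S ∈ Σ_F` invertible in `Σ_F`. -/
theorem delta_iff_fderiv_comp (Q : Module.End K (Polynomial K)) (hQ : ShiftInv K Q) :
    DeltaOp K Q ↔ ∃ S Sinv : Module.End K (Polynomial K),
      ShiftInv K S ∧ ShiftInv K Sinv ∧ S * Sinv = 1 ∧ Sinv * S = 1 ∧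
      Q = fderivF K * S := delta_iff_fderiv_comp' K Q hQ
end
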